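/- Let λ > 2. For every g ∈ Γ_λ with |tr g| > 2 there exist an F_I-periodic orbit x₁, …, xₙ with associated matrices A₁, …, Aₙ, an element h ∈ Γ_λ and a sign ε ∈ {1, −1} such that h g h⁻¹ = ε · (Aₙ·…·A₁). (Together with the fact that such products are hyperbolic, this expresses that the equivalence classes of F_I-periodic orbits are in bijection with the conjugacy classes of hyperbolic elements of the Hecke triangle group.) -/

import Mathlib

open scoped MatrixGroups
open Matrix

/-- The Möbius action of `g ∈ SL(2,ℝ)` on real numbers, `g.x = (ax+b)/(cx+d)`. -/
noncomputable def moebius (g : SL(2, ℝ)) (x : ℝ) : ℝ :=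
  ((g : Matrix (Fin 2) (Fin 2) ℝ) 0 0 * x + (g : Matrix (Fin 2) (Fin 2) ℝ) 0 1) /
    ((g : Matrix (Fin 2) (Fin 2) ℝ) 1 0 * x + (g : Matrix (Fin 2) (Fin 2) ℝ) 1 1)

/-- The denominator `cx + d` of the Möbius action. -/
def moebiusDenom (g : SL(2, ℝ)) (x : ℝ) : ℝ :=
  (g : Matrix (Fin 2) (Fin 2) ℝ) 1 0 * x + (g : Matrix (Fin 2) (Fin 2) ℝ) 1 1

/-- `x : Fin (n+1) → ℝ` is an `F_I`-periodic orbit with associated matrices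
`A : Fin (n+1) → SL(2,ℝ)`: for each `k` (cyclically), either `xₖ ∈ (−1,0)` and `Aₖ = g₂`,
or `xₖ ∈ (0,1)` and `Aₖ = g₃`, or `xₖ ∈ (−1+mλ, −1+(m+1)λ)` and `Aₖ = T⁻ᵐ` for some
`m ≥ 1`, or `xₖ ∈ (1−(m+1)λ, 1−mλ)` and `Aₖ = Tᵐ` for some `m ≥ 1`; and `Aₖ.xₖ = xₖ₊₁`
(with nonvanishing denominator). -/
def IsFIPeriodicOrbit (lam : ℝ) (T g₂ g₃ : SL(2, ℝ)) (n : ℕ)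
    (x : Fin (n + 1) → ℝ) (A : Fin (n + 1) → SL(2, ℝ)) : Prop :=
  ∀ k : Fin (n + 1),
    ((x k ∈ Set.Ioo (-1 : ℝ) 0 ∧ A k = g₂) ∨
      (x k ∈ Set.Ioo (0 : ℝ) 1 ∧ A k = g₃) ∨
      (∃ m : ℕ, 1 ≤ m ∧ x k ∈ Set.Ioo (-1 + m * lam) (-1 + (m + 1) * lam) ∧
        A k = T⁻¹ ^ m) ∨
      (∃ m : ℕ, 1 ≤ m ∧ x k ∈ Set.Ioo (1 - (m + 1) * lam) (1 - m * lam) ∧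
        A k = T ^ m)) ∧
    moebiusDenom (A k) (x k) ≠ 0 ∧ moebius (A k) (x k) = x (k + 1)

/-!
Since `S² = -1`, every element of `Γ_λ` is `±(T^{n₁} S) ⋯ (T^{nₖ} S)` (a power `T^a` being
`-(T^a S)(T^0 S)`). Rotating such a word is conjugation inside `Γ_λ`, and
`T^a S T^0 S T^b = -T^{a+b}`, so a zero exponent can be removed at the cost of a sign unless the
word is `S` or `T^a S T^0 S = -T^a`, which are not hyperbolic. Hence a hyperbolic `g` is conjugate
up to sign to a nonempty word with all `nᵢ ≠ 0`.

Such a word is the product along a periodic `F_I`-orbit. The matrix `T^n S` acts by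
`x ↦ nλ - 1/x`; as `λ > 2`, its inverse branch `ψₙ(t) = 1/(nλ - t)` maps `[-1, 1]` into `(-1, 0)`
for `n < 0` and into `(0, 1)` for `n > 0`. The composite of the `ψ_{nᵢ}` has a fixed point `y` in
`(-1, 1)`, and starting from `ψₙ(t)` the map `F_I` applies `g₂ = T⁻¹ S` and then `T^{n+1}`
(resp. `g₃ = T S` and then `T^{n-1}`), reaching `t` with product `T^n S`.
-/

local notation "M2" => Matrix (Fin 2) (Fin 2) ℝ

open Set

section Words

variable {G : Type*} [Group G] {S T : G}

def tsWord (S T : G) (m : List ℤ) : G := (m.map fun n => T ^ n * S).prod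

@[simp] lemma tsWord_nil : tsWord S T [] = 1 := rfl

@[simp] lemma tsWord_cons (n : ℤ) (m : List ℤ) :
    tsWord S T (n :: m) = T ^ n * S * tsWord S T m :=
  List.prod_cons

lemma tsWord_append (l₁ l₂ : List ℤ) :
    tsWord S T (l₁ ++ l₂) = tsWord S T l₁ * tsWord S T l₂ := by
  simp [tsWord]

lemma zpow_mul_tsWord_cons (k n : ℤ) (m : List ℤ) :
    T ^ k * tsWord S T (n :: m) = tsWord S T ((k + n) :: m) := by
  simp [_root_.zpow_add, mul_assoc]

lemma tsWord_mem_closure (m : List ℤ) : tsWord S T m ∈ Subgroup.closure {S, T} :=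
  Subgroup.list_prod_mem _ fun _ hx => by
    obtain ⟨n, -, rfl⟩ := List.mem_map.mp hx
    exact mul_mem (zpow_mem (Subgroup.subset_closure (by simp)) n)
      (Subgroup.subset_closure (by simp))

variable [HasDistribNeg G]

lemma tsWord_cons_zero_cons (hSS : S * S = -1) (a : ℤ) (m : List ℤ) :
    tsWord S T (a :: 0 :: m) = -(T ^ a * tsWord S T m) := by
  simp [mul_assoc, ← mul_assoc S S, hSS]

lemma exists_tsWord_of_mem_closure (hSS : S * S = -1) {g : G}
    (hg : g ∈ Subgroup.closure {S, T}) :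
    ∃ m, g = tsWord S T m ∨ g = -tsWord S T m := by
  let P : G → Prop := fun g => ∃ m, g = tsWord S T m ∨ g = -tsWord S T m
  have hmul : ∀ x, (∀ m, P (x * tsWord S T m)) → ∀ g, P g → P (x * g) := by
    rintro x hx g ⟨m, rfl | rfl⟩
    · exact hx m
    · obtain ⟨m', h | h⟩ := hx m <;> exact ⟨m', by simp [mul_neg, h]⟩
  have hS : ∀ m, S * tsWord S T m = tsWord S T (0 :: m) := by simp
  have hS_inv : S⁻¹ = -S := inv_eq_of_mul_eq_one_right (by rw [mul_neg, hSS, neg_neg])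
  have hT : ∀ (k : ℤ) m, P (T ^ k * tsWord S T m) := by
    rintro k (_ | ⟨n, m⟩)
    · exact ⟨[k, 0], Or.inr (by simp [tsWord_cons_zero_cons hSS])⟩
    · exact ⟨(k + n) :: m, Or.inl (zpow_mul_tsWord_cons k n m)⟩
  induction hg using Subgroup.closure_induction_left with
  | one => exact ⟨[], Or.inl rfl⟩
  | mul_left x hx y _ ih =>
    rcases hx with rfl | rfl
    · exact hmul _ (fun m => ⟨0 :: m, Or.inl (hS m)⟩) _ ih
    · exact hmul _ (by simpa using hT 1) _ ih
  | inv_mul_cancel x hx y _ ih =>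
    rcases hx with rfl | rfl
    · exact hmul _ (fun m => ⟨0 :: m, Or.inr (by rw [hS_inv, neg_mul, hS])⟩) _ ih
    · exact hmul _ (by simpa using hT (-1)) _ ih

def IsConjUpToSign (Γ : Subgroup G) (g w : G) : Prop :=
  ∃ h ∈ Γ, h * g * h⁻¹ = w ∨ h * g * h⁻¹ = -w

lemma IsConjUpToSign.of_eq_or_eq_neg {Γ : Subgroup G} {g w : G} (h : g = w ∨ g = -w) :
    IsConjUpToSign Γ g w :=
  ⟨1, Γ.one_mem, by simpa using h⟩

lemma IsConjUpToSign.trans {Γ : Subgroup G} {g w w' : G} (h₁ : IsConjUpToSign Γ g w)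
    (h₂ : IsConjUpToSign Γ w w') : IsConjUpToSign Γ g w' := by
  obtain ⟨a, ha, e₁⟩ := h₁
  obtain ⟨b, hb, e₂⟩ := h₂
  refine ⟨b * a, mul_mem hb ha, ?_⟩
  rw [show b * a * g * (b * a)⁻¹ = b * (a * g * a⁻¹) * b⁻¹ by group]
  rcases e₁ with e₁ | e₁ <;> rcases e₂ with e₂ | e₂ <;> simp [e₁, e₂]

lemma isConjUpToSign_tsWord_append_comm (l₁ l₂ : List ℤ) :
    IsConjUpToSign (Subgroup.closure {S, T}) (tsWord S T (l₁ ++ l₂)) (tsWord S T (l₂ ++ l₁)) :=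
  ⟨(tsWord S T l₁)⁻¹, inv_mem (tsWord_mem_closure l₁),
    Or.inl (by simp only [tsWord_append]; group)⟩

end Words

lemma trace_coe_conj (a g : SL(2, ℝ)) :
    trace ((a * g * a⁻¹ : SL(2, ℝ)) : M2) = trace (g : M2) := by
  simp only [Matrix.SpecialLinearGroup.coe_mul]
  rw [trace_mul_cycle, ← Matrix.SpecialLinearGroup.coe_mul, inv_mul_cancel,
    Matrix.SpecialLinearGroup.coe_one, one_mul]

lemma IsConjUpToSign.abs_trace_eq {Γ : Subgroup SL(2, ℝ)} {g w : SL(2, ℝ)}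
    (h : IsConjUpToSign Γ g w) : |trace (g : M2)| = |trace (w : M2)| := by
  obtain ⟨a, -, e | e⟩ := h <;> simp [← trace_coe_conj a g, e]

lemma exists_append_eq_cons_zero_cons {m : List ℤ} (h0 : 0 ∈ m) (hm : m ≠ [0]) :
    ∃ l₁ l₂ a t, m = l₁ ++ l₂ ∧ l₂ ++ l₁ = a :: 0 :: t := by
  obtain ⟨p, q, rfl⟩ := List.append_of_mem h0
  rcases p.eq_nil_or_concat' with rfl | ⟨p, a, rfl⟩
  · rcases q.eq_nil_or_concat' with rfl | ⟨q, a, rfl⟩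
    · exact absurd rfl hm
    · exact ⟨0 :: q, [a], a, q, by simp, rfl⟩
  · exact ⟨p, a :: 0 :: q, a, q ++ p, by simp, by simp⟩

theorem exists_isConjUpToSign_tsWord_ne_zero {S T : SL(2, ℝ)} (hSS : S * S = -1)
    (htrS : trace (S : M2) = 0) (htrT : ∀ a : ℤ, trace ((T ^ a : SL(2, ℝ)) : M2) = 2)
    (m : List ℤ) (htr : 2 < |trace ((tsWord S T m : SL(2, ℝ)) : M2)|) :
    ∃ m', m' ≠ [] ∧ (∀ n ∈ m', n ≠ 0) ∧
      IsConjUpToSign (Subgroup.closure {S, T}) (tsWord S T m) (tsWord S T m') := by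
  induction hlen : m.length using Nat.strong_induction_on generalizing m with
  | _ N ih =>
    by_cases h0 : 0 ∈ m
    · by_cases hm0 : m = [0]
      · norm_num [hm0, htrS] at htr
      obtain ⟨l₁, l₂, a, t, rfl, hrot⟩ := exists_append_eq_cons_zero_cons h0 hm0
      have hc := isConjUpToSign_tsWord_append_comm (S := S) (T := T) l₁ l₂
      rw [hrot] at hc
      rcases t with _ | ⟨b, t⟩
      · rw [hc.abs_trace_eq, tsWord_cons_zero_cons hSS] at htr
        simp [htrT] at htr
      have hc' : IsConjUpToSign _ (tsWord S T (l₁ ++ l₂)) (tsWord S T ((a + b) :: t)) :=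
        hc.trans (.of_eq_or_eq_neg (Or.inr (by
          rw [tsWord_cons_zero_cons hSS, zpow_mul_tsWord_cons])))
      have hlt : ((a + b) :: t).length < N := by
        have := congrArg List.length hrot
        simp only [List.length_append, List.length_cons] at this hlen ⊢
        omega
      obtain ⟨m', hm'0, hm', hc''⟩ := ih _ hlt _ (hc'.abs_trace_eq ▸ htr) rfl
      exact ⟨m', hm'0, hm', hc'.trans hc''⟩
    · refine ⟨m, ?_, fun n hn h => h0 (h ▸ hn), .of_eq_or_eq_neg (Or.inl rfl)⟩
      rintro rfl
      norm_num at htr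

section Generators

variable {lam : ℝ} {S T : SL(2, ℝ)}

lemma coe_zpow_of_coe_eq (hT : (T : M2) = !![1, lam; 0, 1]) (k : ℤ) :
    ((T ^ k : SL(2, ℝ)) : M2) = !![1, k * lam; 0, 1] := by
  induction k using Int.induction_on with
  | zero => simp [Matrix.one_fin_two]
  | succ i ih =>
    rw [_root_.zpow_add_one, Matrix.SpecialLinearGroup.coe_mul, ih, hT, Matrix.mul_fin_two]
    push_cast; ring_nf
  | pred i ih =>
    rw [_root_.zpow_sub_one, Matrix.SpecialLinearGroup.coe_mul, ih,
      Matrix.SpecialLinearGroup.coe_inv, hT, Matrix.adjugate_fin_two_of, Matrix.mul_fin_two]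
    push_cast; ring_nf

lemma trace_zpow_eq_two_of_coe_eq (hT : (T : M2) = !![1, lam; 0, 1]) (k : ℤ) :
    trace ((T ^ k : SL(2, ℝ)) : M2) = 2 := by
  rw [coe_zpow_of_coe_eq hT, trace_fin_two_of]; norm_num

lemma mul_self_eq_neg_one_of_coe_eq (hS : (S : M2) = !![0, 1; -1, 0]) : S * S = -1 := by
  ext i j
  fin_cases i <;> fin_cases j <;> simp [Matrix.SpecialLinearGroup.coe_mul, hS]

lemma trace_eq_zero_of_coe_eq (hS : (S : M2) = !![0, 1; -1, 0]) : trace (S : M2) = 0 := by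
  simp [hS, trace_fin_two_of]

lemma coe_zpow_mul_of_coe_eq (hS : (S : M2) = !![0, 1; -1, 0])
    (hT : (T : M2) = !![1, lam; 0, 1]) (k : ℤ) :
    ((T ^ k * S : SL(2, ℝ)) : M2) = !![-(k * lam), 1; -1, 0] := by
  rw [Matrix.SpecialLinearGroup.coe_mul, coe_zpow_of_coe_eq hT, hS, Matrix.mul_fin_two]
  simp

lemma moebius_of_coe_eq {g : SL(2, ℝ)} {a b c d : ℝ} (h : (g : M2) = !![a, b; c, d]) (x : ℝ) :
    moebius g x = (a * x + b) / (c * x + d) ∧ moebiusDenom g x = c * x + d := by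
  simp [moebius, moebiusDenom, h]

lemma moebius_zpow (hT : (T : M2) = !![1, lam; 0, 1]) (k : ℤ) (x : ℝ) :
    moebius (T ^ k) x = x + k * lam ∧ moebiusDenom (T ^ k) x = 1 := by
  simpa using moebius_of_coe_eq (coe_zpow_of_coe_eq hT k) x

lemma moebius_zpow_mul_S (hS : (S : M2) = !![0, 1; -1, 0]) (hT : (T : M2) = !![1, lam; 0, 1])
    (k : ℤ) {x : ℝ} (hx : x ≠ 0) :
    moebius (T ^ k * S) x = k * lam - x⁻¹ ∧ moebiusDenom (T ^ k * S) x = -x := by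
  obtain ⟨hmoeb, hdenom⟩ := moebius_of_coe_eq (coe_zpow_mul_of_coe_eq hS hT k) x
  refine ⟨?_, by rw [hdenom]; ring⟩
  rw [hmoeb, div_eq_iff (by simpa using hx)]
  field_simp
  ring

end Generators

section InverseBranches

variable {lam : ℝ}

/-- The inverse of the branch `x ↦ nλ - 1/x` of `T^n S`. -/
noncomputable def invBranch (lam : ℝ) (n : ℤ) (t : ℝ) : ℝ := (n * lam - t)⁻¹

/-- `ψ_{nₖ} ∘ ⋯ ∘ ψ_{n₁}` for `m = [n₁, …, nₖ]`: the orbit of this point applies `T^{nₖ} S`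
first and `T^{n₁} S` last. -/
noncomputable def invBranches (lam : ℝ) (m : List ℤ) (y : ℝ) : ℝ :=
  m.foldl (fun t n => invBranch lam n t) y

variable {n : ℤ} {t : ℝ}

lemma invBranch_mem_Ioo_of_neg (hlam : 2 < lam) (hn : n < 0) (ht : t ∈ Icc (-1) 1) :
    invBranch lam n t ∈ Ioo (-1) 0 := by
  have hd : n * lam - t < -1 := by
    have : (n : ℝ) ≤ -1 := by exact_mod_cast Int.le_sub_one_of_lt hn
    nlinarith [ht.1]
  refine ⟨?_, inv_lt_zero.2 (by linarith)⟩
  rw [invBranch, lt_inv_of_neg (by norm_num) (by linarith)]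
  simpa using hd

lemma invBranch_mem_Ioo_of_pos (hlam : 2 < lam) (hn : 0 < n) (ht : t ∈ Icc (-1) 1) :
    invBranch lam n t ∈ Ioo 0 1 := by
  have hd : 1 < n * lam - t := by
    have : (1 : ℝ) ≤ n := by exact_mod_cast hn
    nlinarith [ht.2]
  exact ⟨inv_pos.2 (by linarith), inv_lt_one_of_one_lt₀ hd⟩

lemma invBranch_mem_Ioo (hlam : 2 < lam) (hn : n ≠ 0) (ht : t ∈ Icc (-1) 1) :
    invBranch lam n t ∈ Ioo (-1) 1 := by
  rcases hn.lt_or_gt with hn | hn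
  · exact Ioo_subset_Ioo_right zero_le_one (invBranch_mem_Ioo_of_neg hlam hn ht)
  · exact Ioo_subset_Ioo_left (by norm_num) (invBranch_mem_Ioo_of_pos hlam hn ht)

lemma continuousOn_invBranch (hlam : 2 < lam) (hn : n ≠ 0) :
    ContinuousOn (invBranch lam n) (Icc (-1) 1) := by
  refine (continuousOn_const.sub continuousOn_id).inv₀ fun t ht h => ?_
  have hψ : invBranch lam n t ≠ 0 := by
    rcases hn.lt_or_gt with hn | hn
    · exact (invBranch_mem_Ioo_of_neg hlam hn ht).2.ne
    · exact (invBranch_mem_Ioo_of_pos hlam hn ht).1.ne'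
  exact hψ (inv_eq_zero.mpr h)

variable {m : List ℤ} {y : ℝ}

@[simp] lemma invBranches_cons (n : ℤ) (m : List ℤ) (y : ℝ) :
    invBranches lam (n :: m) y = invBranches lam m (invBranch lam n y) := rfl

lemma invBranches_mem_Ioo (hlam : 2 < lam) (hm : ∀ n ∈ m, n ≠ 0) (hy : y ∈ Ioo (-1) 1) :
    invBranches lam m y ∈ Ioo (-1) 1 := by
  induction m generalizing y with
  | nil => exact hy
  | cons n m ih =>
    obtain ⟨hn, hm⟩ := List.forall_mem_cons.mp hm
    exact ih hm (invBranch_mem_Ioo hlam hn (Ioo_subset_Icc_self hy))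

lemma invBranches_cons_mem_Ioo (hlam : 2 < lam) (hm : ∀ k ∈ n :: m, k ≠ 0)
    (hy : y ∈ Icc (-1) 1) : invBranches lam (n :: m) y ∈ Ioo (-1) 1 := by
  obtain ⟨hn, hm⟩ := List.forall_mem_cons.mp hm
  exact invBranches_mem_Ioo (m := m) hlam hm (invBranch_mem_Ioo hlam hn hy)

lemma mapsTo_invBranches (hlam : 2 < lam) (hm : ∀ n ∈ m, n ≠ 0) :
    MapsTo (invBranches lam m) (Icc (-1) 1) (Icc (-1) 1) := by
  intro y hy
  cases m with
  | nil => exact hy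
  | cons n m => exact Ioo_subset_Icc_self (invBranches_cons_mem_Ioo hlam hm hy)

lemma continuousOn_invBranches (hlam : 2 < lam) (hm : ∀ n ∈ m, n ≠ 0) :
    ContinuousOn (invBranches lam m) (Icc (-1) 1) := by
  induction m with
  | nil => exact continuousOn_id
  | cons n m ih =>
    obtain ⟨hn, hm⟩ := List.forall_mem_cons.mp hm
    exact (ih hm).comp (continuousOn_invBranch hlam hn)
      fun t ht => Ioo_subset_Icc_self (invBranch_mem_Ioo hlam hn ht)

lemma exists_isFixedPt_invBranches (hlam : 2 < lam) (hm0 : m ≠ []) (hm : ∀ n ∈ m, n ≠ 0) :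
    ∃ y ∈ Ioo (-1) 1, Function.IsFixedPt (invBranches lam m) y := by
  obtain ⟨y, hy, hfix⟩ := exists_mem_Icc_isFixedPt_of_mapsTo (continuousOn_invBranches hlam hm)
    (by norm_num) (mapsTo_invBranches hlam hm)
  obtain ⟨n, m, rfl⟩ := List.exists_cons_of_ne_nil hm0
  exact ⟨y, hfix.eq ▸ invBranches_cons_mem_Ioo hlam hm hy, hfix⟩

end InverseBranches

section Paths

variable {lam : ℝ} {T g₂ g₃ : SL(2, ℝ)}

def IsFIStep (lam : ℝ) (T g₂ g₃ : SL(2, ℝ)) (x : ℝ) (A : SL(2, ℝ)) : Prop :=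
  ((x ∈ Ioo (-1 : ℝ) 0 ∧ A = g₂) ∨ (x ∈ Ioo (0 : ℝ) 1 ∧ A = g₃) ∨
    (∃ m : ℕ, 1 ≤ m ∧ x ∈ Ioo (-1 + m * lam) (-1 + (m + 1) * lam) ∧ A = T⁻¹ ^ m) ∨
    (∃ m : ℕ, 1 ≤ m ∧ x ∈ Ioo (1 - (m + 1) * lam) (1 - m * lam) ∧ A = T ^ m)) ∧
  moebiusDenom A x ≠ 0

/-- `IsFIPath lam T g₂ g₃ x l y`: the list `l` holds the successive points of an `F_I`-orbit
starting at `x`, each with its matrix, and the image of the last point is `y`. -/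
def IsFIPath (lam : ℝ) (T g₂ g₃ : SL(2, ℝ)) : ℝ → List (ℝ × SL(2, ℝ)) → ℝ → Prop
  | x, [], y => x = y
  | x, p :: l, y =>
    p.1 = x ∧ IsFIStep lam T g₂ g₃ p.1 p.2 ∧ IsFIPath lam T g₂ g₃ (moebius p.2 p.1) l y

namespace IsFIPath

variable {x y z : ℝ} {l l' : List (ℝ × SL(2, ℝ))}

lemma append (hc : IsFIPath lam T g₂ g₃ x l y) (hd : IsFIPath lam T g₂ g₃ y l' z) :
    IsFIPath lam T g₂ g₃ x (l ++ l') z := by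
  induction l generalizing x with
  | nil => exact (show x = y from hc) ▸ hd
  | cons p l ih => exact ⟨hc.1, hc.2.1, ih hc.2.2⟩

lemma getElem_zero_append (h : IsFIPath lam T g₂ g₃ x l y) :
    (l.map Prod.fst ++ [y])[0]'(by simp) = x := by
  cases l with
  | nil => exact (show x = y from h).symm
  | cons p l => exact h.1

lemma getElem (h : IsFIPath lam T g₂ g₃ x l y) (i : ℕ) (hi : i < l.length) :
    IsFIStep lam T g₂ g₃ l[i].1 l[i].2 ∧
      moebius l[i].2 l[i].1 = (l.map Prod.fst ++ [y])[i + 1]'(by simp; omega) := by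
  induction l generalizing x i with
  | nil => simp at hi
  | cons p l ih =>
    cases i with
    | zero => exact ⟨h.2.1, h.2.2.getElem_zero_append.symm⟩
    | succ i => exact ih h.2.2 i (by simpa using hi)

lemma isFIPeriodicOrbit {p : ℝ × SL(2, ℝ)} (h : IsFIPath lam T g₂ g₃ x (p :: l) x) :
    IsFIPeriodicOrbit lam T g₂ g₃ l.length (fun k => ((p :: l)[(k : ℕ)]).1)
      (fun k => ((p :: l)[(k : ℕ)]).2) := by
  intro k
  obtain ⟨⟨hbranch, hdenom⟩, hnext⟩ := h.getElem k k.isLt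
  refine ⟨hbranch, hdenom, hnext.trans ?_⟩
  rcases Fin.eq_castSucc_or_eq_last k with ⟨j, rfl⟩ | rfl
  · simp [List.getElem_append_left, Fin.coeSucc_eq_succ]
  · simpa using h.getElem_zero_append.symm

end IsFIPath

end Paths

section Orbits

variable {lam : ℝ} {S T g₂ g₃ : SL(2, ℝ)} {y : ℝ}

lemma exists_isFIPath_inv_pow (hlam : 2 < lam) (hT : (T : M2) = !![1, lam; 0, 1]) (k : ℕ)
    (hy : y ∈ Ioo (-1) 1) :
    ∃ l, IsFIPath lam T g₂ g₃ (y + k * lam) l y ∧ (l.map Prod.snd).reverse.prod = T⁻¹ ^ k := by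
  rcases Nat.eq_zero_or_pos k with rfl | hk
  · exact ⟨[], by simp [IsFIPath], rfl⟩
  have hTk : T⁻¹ ^ k = T ^ (-(k : ℤ)) := by rw [_root_.zpow_neg, zpow_natCast, inv_pow]
  obtain ⟨hmoeb, hdenom⟩ := moebius_zpow hT (-(k : ℤ)) (y + k * lam)
  refine ⟨[(y + k * lam, T⁻¹ ^ k)], ⟨rfl, ⟨?_, by rw [hTk, hdenom]; exact one_ne_zero⟩, ?_⟩,
    by simp⟩
  · exact .inr <| .inr <| .inl ⟨k, hk, ⟨by linarith [hy.1], by linarith [hy.2]⟩, rfl⟩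
  · show moebius _ _ = y
    rw [hTk, hmoeb]; push_cast; ring

lemma exists_isFIPath_pow (hlam : 2 < lam) (hT : (T : M2) = !![1, lam; 0, 1]) (k : ℕ)
    (hy : y ∈ Ioo (-1) 1) :
    ∃ l, IsFIPath lam T g₂ g₃ (y - k * lam) l y ∧ (l.map Prod.snd).reverse.prod = T ^ k := by
  rcases Nat.eq_zero_or_pos k with rfl | hk
  · exact ⟨[], by simp [IsFIPath], rfl⟩
  obtain ⟨hmoeb, hdenom⟩ := moebius_zpow hT k (y - k * lam)
  rw [zpow_natCast] at hmoeb hdenom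
  refine ⟨[(y - k * lam, T ^ k)], ⟨rfl, ⟨?_, by simp [hdenom]⟩, ?_⟩, by simp⟩
  · exact .inr <| .inr <| .inr ⟨k, hk, ⟨by linarith [hy.1], by linarith [hy.2]⟩, rfl⟩
  · show moebius _ _ = y
    rw [hmoeb]; push_cast; ring

/-- `T^n S = T^{n+1} g₂` for `n < 0` and `T^n S = T^{n-1} g₃` for `n > 0`. -/
lemma exists_isFIPath_invBranch (hlam : 2 < lam) (hS : (S : M2) = !![0, 1; -1, 0])
    (hT : (T : M2) = !![1, lam; 0, 1]) (hg₂ : g₂ = T⁻¹ * S) (hg₃ : g₃ = T * S) {n : ℤ}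
    (hn : n ≠ 0) (hy : y ∈ Ioo (-1) 1) :
    ∃ l, l ≠ [] ∧ IsFIPath lam T g₂ g₃ (invBranch lam n y) l y ∧
      (l.map Prod.snd).reverse.prod = T ^ n * S := by
  have hinv : (invBranch lam n y)⁻¹ = n * lam - y := inv_inv _
  rcases hn.lt_or_gt with hn | hn
  · have hx := invBranch_mem_Ioo_of_neg hlam hn (Ioo_subset_Icc_self hy)
    obtain ⟨k, rfl⟩ : ∃ k : ℕ, n = -(k + 1) := ⟨(-n - 1).toNat, by omega⟩
    have hg₂' : g₂ = T ^ (-1 : ℤ) * S := by rw [hg₂, _root_.zpow_neg_one]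
    obtain ⟨hmoeb, hdenom⟩ := moebius_zpow_mul_S hS hT (-1) hx.2.ne
    obtain ⟨l, hl, hprod⟩ := exists_isFIPath_inv_pow (g₂ := g₂) (g₃ := g₃) hlam hT k hy
    refine ⟨(invBranch lam _ y, g₂) :: l, List.cons_ne_nil _ _,
      ⟨rfl, ⟨.inl ⟨hx, rfl⟩, ?_⟩, ?_⟩, ?_⟩
    · dsimp only
      rw [hg₂', hdenom]; exact neg_ne_zero.2 hx.2.ne
    · convert hl using 1
      dsimp only
      rw [hg₂', hmoeb, hinv]; push_cast; ring
    · simp only [List.map_cons, List.reverse_cons, List.prod_append, hprod, hg₂,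
        List.prod_cons, List.prod_nil, mul_one]
      group
  · have hx := invBranch_mem_Ioo_of_pos hlam hn (Ioo_subset_Icc_self hy)
    obtain ⟨k, rfl⟩ : ∃ k : ℕ, n = k + 1 := ⟨(n - 1).toNat, by omega⟩
    have hg₃' : g₃ = T ^ (1 : ℤ) * S := by rw [hg₃, zpow_one]
    obtain ⟨hmoeb, hdenom⟩ := moebius_zpow_mul_S hS hT 1 hx.1.ne'
    obtain ⟨l, hl, hprod⟩ := exists_isFIPath_pow (g₂ := g₂) (g₃ := g₃) hlam hT k hy
    refine ⟨(invBranch lam _ y, g₃) :: l, List.cons_ne_nil _ _,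
      ⟨rfl, ⟨.inr (.inl ⟨hx, rfl⟩), ?_⟩, ?_⟩, ?_⟩
    · dsimp only
      rw [hg₃', hdenom]; exact neg_ne_zero.2 hx.1.ne'
    · convert hl using 1
      dsimp only
      rw [hg₃', hmoeb, hinv]; push_cast; ring
    · simp only [List.map_cons, List.reverse_cons, List.prod_append, hprod, hg₃,
        List.prod_cons, List.prod_nil, mul_one]
      group

lemma exists_isFIPath_invBranches (hlam : 2 < lam) (hS : (S : M2) = !![0, 1; -1, 0])
    (hT : (T : M2) = !![1, lam; 0, 1]) (hg₂ : g₂ = T⁻¹ * S) (hg₃ : g₃ = T * S) {m : List ℤ}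
    (hm : ∀ n ∈ m, n ≠ 0) (hy : y ∈ Ioo (-1) 1) :
    ∃ l, (m ≠ [] → l ≠ []) ∧ IsFIPath lam T g₂ g₃ (invBranches lam m y) l y ∧
      (l.map Prod.snd).reverse.prod = tsWord S T m := by
  induction m generalizing y with
  | nil => exact ⟨[], fun h => (h rfl).elim, rfl, rfl⟩
  | cons n m ih =>
    obtain ⟨hn, hm⟩ := List.forall_mem_cons.mp hm
    obtain ⟨l, -, hl, hlprod⟩ := ih hm (invBranch_mem_Ioo hlam hn (Ioo_subset_Icc_self hy))
    obtain ⟨l', hl'0, hl', hl'prod⟩ := exists_isFIPath_invBranch hlam hS hT hg₂ hg₃ hn hy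
    refine ⟨l ++ l', fun _ => by simp [hl'0], hl.append hl', ?_⟩
    simp [hlprod, hl'prod, mul_assoc]

theorem exists_isFIPeriodicOrbit_prod_eq_tsWord (hlam : 2 < lam)
    (hS : (S : M2) = !![0, 1; -1, 0]) (hT : (T : M2) = !![1, lam; 0, 1])
    (hg₂ : g₂ = T⁻¹ * S) (hg₃ : g₃ = T * S) {m : List ℤ} (hm0 : m ≠ [])
    (hm : ∀ n ∈ m, n ≠ 0) :
    ∃ (n : ℕ) (x : Fin (n + 1) → ℝ) (A : Fin (n + 1) → SL(2, ℝ)),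
      IsFIPeriodicOrbit lam T g₂ g₃ n x A ∧ (List.ofFn A).reverse.prod = tsWord S T m := by
  obtain ⟨y, hy, hfix⟩ := exists_isFixedPt_invBranches hlam hm0 hm
  obtain ⟨l, hl0, hl, hprod⟩ := exists_isFIPath_invBranches hlam hS hT hg₂ hg₃ hm hy
  rw [hfix.eq] at hl
  obtain ⟨p, l, rfl⟩ := List.exists_cons_of_ne_nil (hl0 hm0)
  exact ⟨l.length, _, _, hl.isFIPeriodicOrbit, by simpa using hprod⟩

end Orbits

theorem hyperbolic_conjugate_to_FI_orbit_product
    (lam : ℝ) (hlam : 2 < lam)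
    (S T g₂ g₃ : SL(2, ℝ))
    (hS : (S : Matrix (Fin 2) (Fin 2) ℝ) = !![0, 1; -1, 0])
    (hT : (T : Matrix (Fin 2) (Fin 2) ℝ) = !![1, lam; 0, 1])
    (hg₂ : g₂ = T⁻¹ * S) (hg₃ : g₃ = T * S)
    (Γ : Subgroup SL(2, ℝ)) (hΓ : Γ = Subgroup.closure {S, T}) :
    ∀ g ∈ Γ, 2 < |Matrix.trace (g : Matrix (Fin 2) (Fin 2) ℝ)| →
      ∃ (n : ℕ) (x : Fin (n + 1) → ℝ) (A : Fin (n + 1) → SL(2, ℝ)),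
        IsFIPeriodicOrbit lam T g₂ g₃ n x A ∧
        ∃ h ∈ Γ, ∃ ε : ℝ, (ε = 1 ∨ ε = -1) ∧
          ((h * g * h⁻¹ : SL(2, ℝ)) : Matrix (Fin 2) (Fin 2) ℝ) =
            ε • (((List.ofFn A).reverse.prod : SL(2, ℝ)) : Matrix (Fin 2) (Fin 2) ℝ) := by
  subst hΓ
  intro g hg htr
  have hSS := mul_self_eq_neg_one_of_coe_eq hS
  obtain ⟨m, hgm⟩ := exists_tsWord_of_mem_closure hSS hg
  have hgw : IsConjUpToSign (Subgroup.closure {S, T}) g (tsWord S T m) :=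
    .of_eq_or_eq_neg hgm
  obtain ⟨m', hm'0, hm', hw⟩ := exists_isConjUpToSign_tsWord_ne_zero hSS (trace_eq_zero_of_coe_eq hS)
    (trace_zpow_eq_two_of_coe_eq hT) m (hgw.abs_trace_eq ▸ htr)
  obtain ⟨n, x, A, horb, hprod⟩ :=
    exists_isFIPeriodicOrbit_prod_eq_tsWord hlam hS hT hg₂ hg₃ hm'0 hm'
  obtain ⟨h, hh, hconj⟩ := hgw.trans hw
  refine ⟨n, x, A, horb, h, hh, ?_⟩
  rcases hconj with hc | hc
  · exact ⟨1, .inl rfl, by rw [hc, hprod, one_smul]⟩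
  · exact ⟨-1, .inr rfl, by rw [hc, hprod, Matrix.SpecialLinearGroup.coe_neg, neg_one_smul]⟩
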